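/- For the Rindler metric ds² = -(1+aξ)²dτ² + dξ² + dy² + dz² (coordinates (τ,ξ,y,z), constant a > 0), the Landau–Lifshitz pseudotensor l^{μν} = -(1/g)∂_λ τ^{μνλ} with τ^{μνλ} = k ∂_ρ[(-g)(g^{μν}g^{ρλ} - g^{μρ}g^{νλ})] equals l^{μν} = k (g''/g)(δ^μ_2 δ^ν_2 + δ^μ_3 δ^ν_3), where g = -(1+aξ)² is the metric determinant and primes denote d/dξ. In particular its trace is l = g_{μν}l^{μν} = 2k g''/g, which is nonzero, and l^{00} = 0. -/

import Mathlib

/-- Partial derivative of a scalar field on ℝ⁴ along the ρ-th coordinate. -/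
noncomputable def pd (ρ : Fin 4) (F : (Fin 4 → ℝ) → ℝ) (x : Fin 4 → ℝ) : ℝ :=
  fderiv ℝ F x (Pi.single ρ 1)

/-- The Rindler metric function g(ξ) = -(1+aξ)², which is also the metric
determinant. -/
noncomputable def rindlerG (a ξ : ℝ) : ℝ := -(1 + a * ξ) ^ 2

/-- Inverse Rindler metric g^{μν} = diag(-(1+aξ)⁻², 1, 1, 1). -/
noncomputable def rindlerGinv (a : ℝ) (x : Fin 4 → ℝ) :
    Matrix (Fin 4) (Fin 4) ℝ :=
  Matrix.diagonal ![-(1 + a * x 1)⁻¹ ^ 2, 1, 1, 1]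

/-- Rindler metric (lower indices) g_{μν} = diag(-(1+aξ)², 1, 1, 1). -/
noncomputable def rindlerGlow (a : ℝ) (x : Fin 4 → ℝ) :
    Matrix (Fin 4) (Fin 4) ℝ :=
  Matrix.diagonal ![-(1 + a * x 1) ^ 2, 1, 1, 1]

/-- Landau–Lifshitz superpotential τ^{μνλ} for the Rindler metric. -/
noncomputable def rindlerTau (k a : ℝ) (μ ν lam : Fin 4) (x : Fin 4 → ℝ) : ℝ :=
  k * ∑ ρ, pd ρ (fun y => (-(rindlerG a (y 1))) *
      (rindlerGinv a y μ ν * rindlerGinv a y ρ lam -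
       rindlerGinv a y μ ρ * rindlerGinv a y ν lam)) x

/-- Landau–Lifshitz pseudotensor l^{μν} for the Rindler metric. -/
noncomputable def rindlerLL (k a : ℝ) (μ ν : Fin 4) (x : Fin 4 → ℝ) : ℝ :=
  -(rindlerG a (x 1))⁻¹ * ∑ lam, pd lam (rindlerTau k a μ ν lam) x

/-!
All metric components depend on `ξ = x 1` alone, and the partial derivative of a function of `ξ`
alone is its `ξ`-derivative in the `ξ`-direction and zero in the others. Hence both divergences in
the definition collapse to `ξ`-derivatives:
`l^{μν} = -(k/g) ∂_ξ² [(-g)(g^{μν} g^{11} - g^{μ1} g^{ν1})]`.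
Where `1 + aξ ≠ 0` the bracket is `-g` for `μ = ν ∈ {2, 3}`, the constant `-1` for `μ = ν = 0`
(because `(-g) g^{00} = -1`) and `0` otherwise (the two terms cancel for `μ = ν = 1`), so its second
derivative is `-g''` times the transverse projector.
-/

open Topology

theorem fderiv_comp_apply_apply {𝕜 ι : Type*} [NontriviallyNormedField 𝕜] [Fintype ι]
    (f : 𝕜 → 𝕜) (i : ι) (x v : ι → 𝕜) :
    fderiv 𝕜 (fun y : ι → 𝕜 => f (y i)) x v = deriv f (x i) * v i := by
  classical
  by_cases hf : DifferentiableAt 𝕜 f (x i)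
  · have h := hf.hasDerivAt.comp_hasFDerivAt x
      (hasFDerivAt_apply (𝕜 := 𝕜) (F' := fun _ => 𝕜) i x)
    rw [Function.comp_def] at h
    rw [h.fderiv]
    simp [mul_comm]
  · have hcomp : ¬DifferentiableAt 𝕜 (fun y : ι → 𝕜 => f (y i)) x := fun h => hf <| by
      have hu : DifferentiableAt 𝕜 (Function.update x i) (x i) :=
        (hasFDerivAt_update x (x i)).differentiableAt
      rw [← Function.update_eq_self i x] at h
      simpa [Function.comp_def] using h.comp (x i) hu
    simp [fderiv_zero_of_not_differentiableAt hcomp, deriv_zero_of_not_differentiableAt hf]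

theorem pd_comp_apply (f : ℝ → ℝ) (i ρ : Fin 4) (x : Fin 4 → ℝ) :
    pd ρ (fun y => f (y i)) x = if ρ = i then deriv f (x i) else 0 := by
  simp [pd, fderiv_comp_apply_apply, Pi.single_apply, eq_comm]

theorem sum_pd_comp_apply (F : Fin 4 → ℝ → ℝ) (i : Fin 4) (x : Fin 4 → ℝ) :
    ∑ ρ, pd ρ (fun y => F ρ (y i)) x = deriv (F i) (x i) := by
  simp [pd_comp_apply]

noncomputable def rindlerGinvAt (a s : ℝ) : Matrix (Fin 4) (Fin 4) ℝ :=
  Matrix.diagonal ![-(1 + a * s)⁻¹ ^ 2, 1, 1, 1]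

noncomputable def rindlerH (a : ℝ) (μ ν ρ lam : Fin 4) (s : ℝ) : ℝ :=
  -rindlerG a s * (rindlerGinvAt a s μ ν * rindlerGinvAt a s ρ lam -
    rindlerGinvAt a s μ ρ * rindlerGinvAt a s ν lam)

-- `rindlerGinv a y` unfolds to `rindlerGinvAt a (y 1)`, so `sum_pd_comp_apply` applies directly.
theorem rindlerTau_eq_deriv_rindlerH (k a : ℝ) (μ ν lam : Fin 4) :
    rindlerTau k a μ ν lam = fun y => k * deriv (rindlerH a μ ν 1 lam) (y 1) := by
  funext y
  exact congrArg (k * ·) (sum_pd_comp_apply (fun ρ => rindlerH a μ ν ρ lam) 1 y)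

theorem rindlerLL_eq_deriv_deriv_rindlerH (k a : ℝ) (μ ν : Fin 4) (x : Fin 4 → ℝ) :
    rindlerLL k a μ ν x =
      -(rindlerG a (x 1))⁻¹ * (k * deriv (deriv (rindlerH a μ ν 1 1)) (x 1)) := by
  simp only [rindlerLL, rindlerTau_eq_deriv_rindlerH]
  rw [sum_pd_comp_apply (fun lam s => k * deriv (rindlerH a μ ν 1 lam) s), deriv_const_mul_field']

def transverseDelta (μ ν : Fin 4) : ℝ :=
  (if μ = 2 then 1 else 0) * (if ν = 2 then 1 else 0) +
    (if μ = 3 then 1 else 0) * (if ν = 3 then 1 else 0)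

theorem rindlerH_one_one {a t : ℝ} (ht : 1 + a * t ≠ 0) (μ ν : Fin 4) :
    rindlerH a μ ν 1 1 t =
      -transverseDelta μ ν * rindlerG a t - (if μ = 0 then 1 else 0) * (if ν = 0 then 1 else 0) := by
  fin_cases μ <;> fin_cases ν <;> simp [rindlerH, rindlerGinvAt, rindlerG, transverseDelta]
  field_simp

theorem deriv_rindlerG (a : ℝ) : deriv (rindlerG a) = fun s => -(2 * a * (1 + a * s)) := by
  funext s
  have h : HasDerivAt (rindlerG a) (-(2 * a * (1 + a * s))) s :=
    ((((hasDerivAt_id' s).const_mul a).const_add 1).fun_pow 2).fun_neg.congr_deriv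
      (by push_cast; ring)
  exact h.deriv

theorem deriv_deriv_rindlerG (a : ℝ) : deriv (deriv (rindlerG a)) = fun _ => -(2 * a ^ 2) := by
  funext s
  simp only [deriv_rindlerG, deriv.fun_neg', deriv_const_mul_field', deriv_const_add',
    deriv_const_mul_id']
  ring

theorem deriv_deriv_rindlerH_one_one {a s : ℝ} (hs : 1 + a * s ≠ 0) (μ ν : Fin 4) :
    deriv (deriv (rindlerH a μ ν 1 1)) s =
      -transverseDelta μ ν * deriv (deriv (rindlerG a)) s := by
  have hev : rindlerH a μ ν 1 1 =ᶠ[𝓝 s] fun t => -transverseDelta μ ν * rindlerG a t -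
      (if μ = 0 then 1 else 0) * (if ν = 0 then 1 else 0) := by
    have hcont : Continuous fun t : ℝ => 1 + a * t := by fun_prop
    filter_upwards [hcont.continuousAt.eventually_ne hs] with t ht
    exact rindlerH_one_one ht μ ν
  rw [hev.deriv.deriv_eq]
  simp only [deriv_sub_const_fun, deriv_const_mul_field', deriv_const_mul_field]

theorem rindlerLL_eq_transverseDelta {k a : ℝ} {x : Fin 4 → ℝ} (hx : 1 + a * x 1 ≠ 0)
    (μ ν : Fin 4) :
    rindlerLL k a μ ν x =
      k * (deriv (deriv (rindlerG a)) (x 1) / rindlerG a (x 1)) * transverseDelta μ ν := by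
  rw [rindlerLL_eq_deriv_deriv_rindlerH, deriv_deriv_rindlerH_one_one hx]
  ring

theorem sum_rindlerGlow_mul_transverseDelta (a : ℝ) (x : Fin 4 → ℝ) (c : ℝ) :
    ∑ μ, ∑ ν, rindlerGlow a x μ ν * (c * transverseDelta μ ν) = 2 * c := by
  simp [Fin.sum_univ_four, rindlerGlow, transverseDelta, two_mul]

theorem deriv_deriv_rindlerG_div_ne_zero {a ξ : ℝ} (ha : a ≠ 0) (hξ : 1 + a * ξ ≠ 0) :
    deriv (deriv (rindlerG a)) ξ / rindlerG a ξ ≠ 0 := by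
  rw [deriv_deriv_rindlerG, rindlerG]
  exact div_ne_zero (by simpa using ha) (neg_ne_zero.mpr (pow_ne_zero 2 hξ))

/-- For Rindler spacetime, the Landau–Lifshitz pseudotensor equals
l^{μν} = k (g''/g)(δ^μ_2 δ^ν_2 + δ^μ_3 δ^ν_3); its trace l = 2k g''/g is
nonzero (for a ≠ 0, k ≠ 0) and l^{00} = 0. -/
theorem rindler_landau_lifshitz (k a : ℝ) (hk : k ≠ 0) (ha : 0 < a)
    (x : Fin 4 → ℝ) (hx : 0 < 1 + a * x 1) :
    (∀ μ ν, rindlerLL k a μ ν x =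
      k * (deriv (deriv (rindlerG a)) (x 1) / rindlerG a (x 1)) *
        ((if μ = 2 then (1:ℝ) else 0) * (if ν = 2 then (1:ℝ) else 0) +
         (if μ = 3 then (1:ℝ) else 0) * (if ν = 3 then (1:ℝ) else 0))) ∧
    (∑ μ, ∑ ν, rindlerGlow a x μ ν * rindlerLL k a μ ν x) =
      2 * k * (deriv (deriv (rindlerG a)) (x 1) / rindlerG a (x 1)) ∧
    (∑ μ, ∑ ν, rindlerGlow a x μ ν * rindlerLL k a μ ν x) ≠ 0 ∧
    rindlerLL k a 0 0 x = 0 := by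
  have hLL := rindlerLL_eq_transverseDelta (k := k) hx.ne'
  have htrace : (∑ μ, ∑ ν, rindlerGlow a x μ ν * rindlerLL k a μ ν x) =
      2 * k * (deriv (deriv (rindlerG a)) (x 1) / rindlerG a (x 1)) := by
    simp only [hLL]
    rw [sum_rindlerGlow_mul_transverseDelta, mul_assoc]
  refine ⟨hLL, htrace, ?_, ?_⟩
  · rw [htrace]
    exact mul_ne_zero (mul_ne_zero two_ne_zero hk)
      (deriv_deriv_rindlerG_div_ne_zero ha.ne' hx.ne')
  · simp [hLL, transverseDelta]
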